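/- arXiv:1009.2158 — 2 statements merged into one kernel-verified Lean document; each statement's English description precedes it below -/
import Mathlib

section
/- For all quaternions a, b, y, z, the sum ((a*y)*(star z))*(star b) + ((a*z)*(star y))*(star b) + ((b*y)*(star z))*(star a) + ((b*z)*(star y))*(star a) equals (4 * re(a * star b) * re(y * star z)) • 1, i.e. it is the real scalar 4·Re(a b̄)·Re(y z̄). -/
/-! Since `z * star y = star (y * star z)`, the sum factors as `a * (p + star p) * star b +
b * (p + star p) * star a` with `p = y * star z`; `p + star p = 2 Re p` is a central real scalar,
leaving `2 Re p • (q + star q)` with `q = a * star b`, which is again `2 Re q`. -/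

namespace Quaternion

theorem mul_self_add_star_mul {R : Type*} [CommRing R] (a p c : Quaternion R) :
    a * (p + star p) * c = (2 * p.re) • (a * c) := by
  rw [self_add_star', mul_coe_eq_smul, smul_mul_assoc]

end Quaternion

/-- For all quaternions `a b y z`, the symmetrized sum equals the real scalar
`4 Re(a b*) Re(y z*)`. -/
theorem quaternion_pairing_identity_sym (a b y z : Quaternion ℝ) :
    ((a * y) * star z) * star b + ((a * z) * star y) * star b
      + ((b * y) * star z) * star a + ((b * z) * star y) * star a
      = (4 * (a * star b).re * (y * star z).re) • (1 : Quaternion ℝ) := by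
  calc _ = a * (y * star z + star (y * star z)) * star b
        + b * (y * star z + star (y * star z)) * star a := by
        rw [star_mul, star_star]; noncomm_ring
    _ = (2 * (y * star z).re) • (a * star b + star (a * star b)) := by
        rw [Quaternion.mul_self_add_star_mul, Quaternion.mul_self_add_star_mul, star_mul, star_star,
          smul_add]
    _ = _ := by
        rw [Quaternion.self_add_star', ← Quaternion.coe_mul_eq_smul, ← Quaternion.coe_mul,
          Algebra.smul_def, mul_one, Quaternion.algebraMap_def]
        congr 1; ring
end

section
/- For all octonions a, y, z, the identity (a*y)*(star z) + (a*z)*(star y) = (2 * re(y * star z)) • a holds, even though octonion multiplication is not associative. -/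
noncomputable section

/-- The octonions realized as the Cayley–Dickson double of the quaternions. -/
abbrev Octonion := Quaternion ℝ × Quaternion ℝ

/-- Cayley–Dickson multiplication: `(ξ, η)(γ, δ) = (ξγ − δ*η, δξ + ηγ*)`. -/
def omul (x y : Octonion) : Octonion :=
  (x.1 * y.1 - star y.2 * x.2, y.2 * x.1 + x.2 * star y.1)

/-- Octonion conjugation: `star (ξ, η) = (ξ*, −η)`. -/
def ostar (x : Octonion) : Octonion := (star x.1, -x.2)

/-- Real part of an octonion. -/
def ore (x : Octonion) : ℝ := x.1.re

/-! Expanded with the (associative) quaternion ring laws, each Cayley–Dickson component of the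
left-hand side is a quaternion multiplied on either side by sums `p q* + q p*` or `p* q + q* p`.
These equal `2 Re(p q*)`, a real scalar and hence central, and the two real parts that occur add
up to the real part of the octonion product `y z*`. -/

namespace Quaternion

variable {R : Type*} [CommRing R]

theorem mul_star_add_mul_star (p q : Quaternion R) :
    p * star q + q * star p = ((2 * (p * star q).re : R) : Quaternion R) := by
  rw [← self_add_star', star_mul, star_star]

theorem star_mul_add_star_mul (p q : Quaternion R) :
    star p * q + star q * p = ((2 * (star p * q).re : R) : Quaternion R) := by
  simpa using mul_star_add_mul_star (star p) (star q)

theorem re_mul_star_eq_re_star_mul (p q : Quaternion R) : (p * star q).re = (star p * q).re := by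
  simp only [re_mul, re_star, imI_star, imJ_star, imK_star]
  ring

end Quaternion

open Quaternion

theorem ore_omul_ostar (y z : Octonion) :
    ore (omul y (ostar z)) = (y.1 * star z.1).re + (star z.2 * y.2).re := by
  simp [ore, omul, ostar]

theorem fst_omul_ostar_add_omul_ostar (a y z : Octonion) :
    (omul (omul a y) (ostar z) + omul (omul a z) (ostar y)).1
      = a.1 * (y.1 * star z.1 + z.1 * star y.1) + (star z.2 * y.2 + star y.2 * z.2) * a.1 := by
  simp only [omul, ostar, star_neg, star_star, Prod.fst_add]
  noncomm_ring

theorem snd_omul_ostar_add_omul_ostar (a y z : Octonion) :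
    (omul (omul a y) (ostar z) + omul (omul a z) (ostar y)).2
      = (z.2 * star y.2 + y.2 * star z.2) * a.2 + a.2 * (star y.1 * z.1 + star z.1 * y.1) := by
  simp only [omul, ostar, star_neg, star_star, Prod.snd_add]
  noncomm_ring

/-- For all octonions `a y z`, `(a*y)*z* + (a*z)*y* = 2 Re(y z*) • a`. -/
theorem octonion_pairing_identity (a y z : Octonion) :
    omul (omul a y) (ostar z) + omul (omul a z) (ostar y)
      = (2 * ore (omul y (ostar z))) • a := by
  rw [ore_omul_ostar, mul_add]
  ext1
  · rw [fst_omul_ostar_add_omul_ostar, mul_star_add_mul_star, star_mul_add_star_mul,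
      mul_coe_eq_smul, coe_mul_eq_smul, ← add_smul, Prod.smul_fst]
  · rw [snd_omul_ostar_add_omul_ostar, mul_star_add_mul_star, star_mul_add_star_mul,
      coe_mul_eq_smul, mul_coe_eq_smul, ← add_smul, Prod.smul_snd,
      re_mul_star_eq_re_star_mul z.2, ← re_mul_star_eq_re_star_mul y.1, add_comm]
end
end
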